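/- Suppose s : 𝒳 → 𝒮 is sufficient (X−S−Y). Then for every β > 0, L*(p;β) = L*(pSY;β), where pSY is the joint pmf on 𝒮 × 𝒴 given by pSY(s0,y) = ∑_{x : s(x)=s0} p(x,y). -/

import Mathlib

/-! A kernel `r` on `𝒮` pulls back to the kernel `r ∘ s` on `𝒳` with the same objective, because
the channel then sees `X` only through `S`. Conversely, a kernel `r` on `𝒳` is replaced by its
`pX`-weighted average over the fibres of `s`. Sufficiency, `p(x, y) pS(s x) = pX(x) pSY(s x, y)`,
leaves the joint law of `(U, Y)` unchanged, while merging `X` into `S` can only lower `I(U; ·)`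
(log-sum inequality). Each defining set of the two infima thus dominates the other. -/

open Finset

noncomputable section
open scoped Classical

variable {𝒳 𝒴 𝒮 𝒯 : Type*}

/-- Marginal of a joint pmf on the first coordinate. -/
def margX [Fintype 𝒴] (p : 𝒳 × 𝒴 → ℝ) (x : 𝒳) : ℝ := ∑ y, p (x, y)

/-- Marginal of a joint pmf on the second coordinate. -/
def margY [Fintype 𝒳] (p : 𝒳 × 𝒴 → ℝ) (y : 𝒴) : ℝ := ∑ x, p (x, y)

/-- Distribution of `S = s(X)`. -/
def margS [Fintype 𝒳] [Fintype 𝒴] (p : 𝒳 × 𝒴 → ℝ) (s : 𝒳 → 𝒮) (s0 : 𝒮) : ℝ :=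
  ∑ x ∈ Finset.univ.filter (fun x => s x = s0), margX p x

/-- Distribution of `T = t(Y)`. -/
def margT [Fintype 𝒳] [Fintype 𝒴] (p : 𝒳 × 𝒴 → ℝ) (t : 𝒴 → 𝒯) (t0 : 𝒯) : ℝ :=
  ∑ y ∈ Finset.univ.filter (fun y => t y = t0), margY p y

/-- Joint distribution of `(S, T) = (s(X), t(Y))`. -/
def margST [Fintype 𝒳] [Fintype 𝒴] (p : 𝒳 × 𝒴 → ℝ) (s : 𝒳 → 𝒮) (t : 𝒴 → 𝒯)
    (w : 𝒮 × 𝒯) : ℝ :=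
  ∑ x ∈ Finset.univ.filter (fun x => s x = w.1),
    ∑ y ∈ Finset.univ.filter (fun y => t y = w.2), p (x, y)

/-- `q` is a probability mass function. -/
def IsPMF {Z : Type*} [Fintype Z] (q : Z → ℝ) : Prop := (∀ z, 0 ≤ q z) ∧ ∑ z, q z = 1

/-- `s` is a sufficient statistic of `X` for `Y` (Markov chain `X - S - Y`). -/
def SuffS [Fintype 𝒴] (p : 𝒳 × 𝒴 → ℝ) (s : 𝒳 → 𝒮) : Prop :=
  ∀ x x' y, s x = s x' → p (x, y) * margX p x' = p (x', y) * margX p x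

/-- `t` is a sufficient statistic of `Y` for `X` (Markov chain `X - T - Y`). -/
def SuffT [Fintype 𝒳] (p : 𝒳 × 𝒴 → ℝ) (t : 𝒴 → 𝒯) : Prop :=
  ∀ x y y', t y = t y' → p (x, y) * margY p y' = p (x, y') * margY p y

/-- Mutual information of a joint pmf on `A × B`. -/
def mutInfo {A B : Type*} [Fintype A] [Fintype B] (q : A × B → ℝ) : ℝ :=
  ∑ z : A × B, if 0 < q z then
    q z * Real.log (q z / ((∑ b, q (z.1, b)) * (∑ a, q (a, z.2)))) else 0

/-- Shannon entropy of a pmf on a finite type. -/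
def entropy {W : Type*} [Fintype W] (r : W → ℝ) : ℝ :=
  -∑ w, if 0 < r w then r w * Real.log (r w) else 0

/-- Wyner's common information of a joint pmf `m` on `A × B`. -/
def wynerCI {A B : Type*} [Fintype A] [Fintype B] (m : A × B → ℝ) : ℝ :=
  sInf { c | ∃ (n : ℕ) (q : A × B × Fin n → ℝ),
    IsPMF q ∧
    (∀ a b, ∑ w, q (a, b, w) = m (a, b)) ∧
    (∀ a b w, q (a, b, w) * (∑ a', ∑ b', q (a', b', w)) =
      (∑ b', q (a, b', w)) * (∑ a', q (a', b, w))) ∧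
    c = mutInfo (fun z : Fin n × (A × B) => q (z.2.1, z.2.2, z.1)) }

/-- Gács–Körner common information of a joint pmf `m` on `A × B`. -/
def gkCI {A B : Type*} [Fintype A] [Fintype B] (m : A × B → ℝ) : ℝ :=
  sSup { c | ∃ (n : ℕ) (f : A → Fin n) (g : B → Fin n),
    (∑ z : A × B, if f z.1 ≠ g z.2 then m z else 0) = 0 ∧
    c = entropy (fun w : Fin n =>
      ∑ a ∈ Finset.univ.filter (fun a => f a = w), ∑ b, m (a, b)) }

/-- Information-bottleneck Lagrangian value. -/
def ibL {A B : Type*} [Fintype A] [Fintype B] (m : A × B → ℝ) (β : ℝ) : ℝ :=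
  sInf { c | ∃ (n : ℕ) (r : A → Fin n → ℝ),
    (∀ a u, 0 ≤ r a u) ∧ (∀ a, ∑ u, r a u = 1) ∧
    c = mutInfo (fun z : Fin n × A => r z.2 z.1 * ∑ b, m (z.2, b))
        - β * mutInfo (fun z : Fin n × B => ∑ a, r a z.1 * m (a, z.2)) }

/-- Information-bottleneck curve. -/
def ibCurve {A B : Type*} [Fintype A] [Fintype B] (m : A × B → ℝ) (R : ℝ) : ℝ :=
  sSup { c | ∃ (n : ℕ) (r : A → Fin n → ℝ),
    (∀ a u, 0 ≤ r a u) ∧ (∀ a, ∑ u, r a u = 1) ∧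
    mutInfo (fun z : Fin n × A => r z.2 z.1 * ∑ b, m (z.2, b)) ≤ R ∧
    c = mutInfo (fun z : Fin n × B => ∑ a, r a z.1 * m (a, z.2)) }

theorem mul_log_add_sub_le_mul_log_div {a b c : ℝ} (ha : 0 ≤ a) (hb : 0 ≤ b) (hc : 0 < c)
    (hab : 0 < a → 0 < b) : a * Real.log c + a - c * b ≤ a * Real.log (a / b) := by
  rcases ha.eq_or_lt with rfl | ha
  · simpa using mul_nonneg hc.le hb
  have hb := hab ha
  have key := mul_le_mul_of_nonneg_left
    (Real.one_sub_inv_le_log_of_pos (div_pos ha (mul_pos hb hc))) ha.le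
  rw [inv_div, Real.log_div ha.ne' (mul_pos hb hc).ne', Real.log_mul hb.ne' hc.ne'] at key
  rw [Real.log_div ha.ne' hb.ne']
  field_simp at key
  linarith

/-- The log-sum inequality. -/
theorem sum_mul_log_sum_div_sum_le {ι : Type*} (F : Finset ι) {a b : ι → ℝ}
    (ha : ∀ i ∈ F, 0 ≤ a i) (hb : ∀ i ∈ F, 0 ≤ b i) (hab : ∀ i ∈ F, 0 < a i → 0 < b i) :
    (∑ i ∈ F, a i) * Real.log ((∑ i ∈ F, a i) / ∑ i ∈ F, b i)
      ≤ ∑ i ∈ F, a i * Real.log (a i / b i) := by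
  rcases (Finset.sum_nonneg ha).eq_or_lt with hA | hA
  · rw [← hA, zero_mul]
    refine Finset.sum_nonneg fun i hi => ?_
    rw [(Finset.sum_eq_zero_iff_of_nonneg ha).1 hA.symm i hi, zero_mul]
  obtain ⟨i, hi, hai⟩ := Finset.exists_lt_of_sum_lt (f := 0) (g := a) (s := F)
    (by simpa using hA)
  have hB : 0 < ∑ i ∈ F, b i :=
    (hab i hi hai).trans_le (Finset.single_le_sum hb hi)
  -- sum the tangent-line bound `a log c + a - c b ≤ a log (a / b)` at `c = A / B`
  calc (∑ i ∈ F, a i) * Real.log ((∑ i ∈ F, a i) / ∑ i ∈ F, b i)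
      = ∑ i ∈ F, (a i * Real.log ((∑ i ∈ F, a i) / ∑ i ∈ F, b i) + a i
          - (∑ i ∈ F, a i) / (∑ i ∈ F, b i) * b i) := by
        rw [Finset.sum_sub_distrib, Finset.sum_add_distrib, ← Finset.sum_mul, ← Finset.mul_sum,
          div_mul_cancel₀ _ hB.ne']
        ring
    _ ≤ ∑ i ∈ F, a i * Real.log (a i / b i) :=
        Finset.sum_le_sum fun i hi =>
          mul_log_add_sub_le_mul_log_div (ha i hi) (hb i hi) (div_pos hA hB) (hab i hi)

section Fibers

variable {A S : Type*} [Fintype A]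

def fiberSum (s : A → S) (f : A → ℝ) (s0 : S) : ℝ :=
  ∑ a ∈ Finset.univ.filter (fun a => s a = s0), f a

variable (s : A → S)

theorem sum_fiberSum [Fintype S] (f : A → ℝ) : ∑ s0, fiberSum s f s0 = ∑ a, f a :=
  Finset.sum_fiberwise _ _ _

theorem fiberSum_mul_comp (g : S → ℝ) (f : A → ℝ) (s0 : S) :
    fiberSum s (fun a => g (s a) * f a) s0 = g s0 * fiberSum s f s0 := by
  rw [fiberSum, fiberSum, Finset.mul_sum]
  exact Finset.sum_congr rfl fun a ha => by rw [(Finset.mem_filter.1 ha).2]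

theorem sum_fiberSum_comm {ι : Type*} [Fintype ι] (f : ι → A → ℝ) (s0 : S) :
    ∑ i, fiberSum s (f i) s0 = fiberSum s (fun a => ∑ i, f i a) s0 :=
  Finset.sum_comm

variable {s}

theorem fiberSum_nonneg {f : A → ℝ} (hf : ∀ a, 0 ≤ f a) (s0 : S) : 0 ≤ fiberSum s f s0 :=
  Finset.sum_nonneg fun a _ => hf a

theorem eq_zero_of_fiberSum_eq_zero {f : A → ℝ} (hf : ∀ a, 0 ≤ f a) {a : A}
    (h : fiberSum s f (s a) = 0) : f a = 0 :=
  (Finset.sum_eq_zero_iff_of_nonneg fun a' _ => hf a').1 h a (by simp)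

end Fibers

section MutualInformation

variable {U A B S : Type*} [Fintype U] [Fintype A] [Fintype B] [Fintype S]

theorem mutInfo_eq_sum {q : A × B → ℝ} (hq : ∀ z, 0 ≤ q z) :
    mutInfo q = ∑ z, q z * Real.log (q z / ((∑ b, q (z.1, b)) * ∑ a, q (a, z.2))) :=
  Finset.sum_congr rfl fun z _ => by
    rcases (hq z).eq_or_lt with h | h
    · simp [← h]
    · simp [h]

theorem mutInfo_fiberSum_le {q : U × A → ℝ} (hq : ∀ z, 0 ≤ q z) (s : A → S) :
    mutInfo (fun z : U × S => fiberSum s (fun a => q (z.1, a)) z.2) ≤ mutInfo q := by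
  rw [mutInfo_eq_sum fun z => fiberSum_nonneg (fun a => hq _) _, mutInfo_eq_sum hq,
    Fintype.sum_prod_type, Fintype.sum_prod_type]
  refine Finset.sum_le_sum fun u _ => ?_
  simp only [sum_fiberSum, sum_fiberSum_comm]
  refine (Finset.sum_le_sum fun s0 _ => ?_).trans_eq (sum_fiberSum s _)
  rw [fiberSum, fiberSum, fiberSum, Finset.mul_sum]
  exact sum_mul_log_sum_div_sum_le _ (fun a _ => hq _)
    (fun a _ => mul_nonneg (Finset.sum_nonneg fun b _ => hq _) (Finset.sum_nonneg fun v _ => hq _))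
    fun a _ hpos => mul_pos (hpos.trans_le (Finset.single_le_sum (fun b _ => hq (u, b)) (by simp)))
      (hpos.trans_le (Finset.single_le_sum (fun v _ => hq (v, a)) (by simp)))

theorem mutInfo_comp_eq_mutInfo_fiberSum (s : A → S) {r : S → U → ℝ} (hr : ∀ s0 u, 0 ≤ r s0 u)
    {f : A → ℝ} (hf : ∀ a, 0 ≤ f a) :
    mutInfo (fun z : U × A => r (s z.2) z.1 * f z.2)
      = mutInfo (fun z : U × S => r z.2 z.1 * fiberSum s f z.2) := by
  have cancel : ∀ x y R c : ℝ,
      x * c * Real.log (x * c / (y * (R * c))) = x * Real.log (x / (y * R)) * c := by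
    intro x y R c
    rcases eq_or_ne c 0 with rfl | hc
    · simp
    · rw [show y * (R * c) = y * R * c by ring, mul_div_mul_right _ _ hc]
      ring
  rw [mutInfo_eq_sum fun z => mul_nonneg (hr _ _) (hf _),
    mutInfo_eq_sum fun z => mul_nonneg (hr _ _) (fiberSum_nonneg hf _),
    Fintype.sum_prod_type, Fintype.sum_prod_type]
  refine Finset.sum_congr rfl fun u _ => ?_
  have hU : ∑ a, r (s a) u * f a = ∑ s0, r s0 u * fiberSum s f s0 := by
    rw [← sum_fiberSum s]
    exact Finset.sum_congr rfl fun s0 _ => fiberSum_mul_comp s (fun s0 => r s0 u) f s0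
  simp only [hU, ← Finset.sum_mul, cancel]
  set Q := ∑ s0, r s0 u * fiberSum s f s0
  rw [← sum_fiberSum s]
  exact Finset.sum_congr rfl fun s0 _ =>
    fiberSum_mul_comp s (fun t => r t u * Real.log (r t u / (Q * ∑ v, r t v))) f s0

end MutualInformation

theorem margX_nonneg {A B : Type*} [Fintype B] {m : A × B → ℝ} (hm : ∀ z, 0 ≤ m z) (a : A) :
    0 ≤ margX m a :=
  Finset.sum_nonneg fun b _ => hm (a, b)

section InformationBottleneck

variable {A B S : Type*} [Fintype A]

def ibObjective [Fintype B] (m : A × B → ℝ) (β : ℝ) {n : ℕ} (r : A → Fin n → ℝ) : ℝ :=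
  mutInfo (fun z : Fin n × A => r z.2 z.1 * ∑ b, m (z.2, b))
    - β * mutInfo (fun z : Fin n × B => ∑ a, r a z.1 * m (a, z.2))

def pushFst (s : A → S) (m : A × B → ℝ) : S × B → ℝ :=
  fun w => fiberSum s (fun a => m (a, w.2)) w.1

theorem sum_pushFst [Fintype B] (s : A → S) (m : A × B → ℝ) (s0 : S) :
    ∑ b, pushFst s m (s0, b) = fiberSum s (margX m) s0 :=
  sum_fiberSum_comm s _ s0

theorem sum_comp_mul_eq_sum_pushFst [Fintype S] (s : A → S) (m : A × B → ℝ) {U : Type*}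
    (r : S → U → ℝ) (u : U) (b : B) :
    ∑ a, r (s a) u * m (a, b) = ∑ s0, r s0 u * pushFst s m (s0, b) := by
  rw [← sum_fiberSum s]
  exact Finset.sum_congr rfl fun s0 _ => fiberSum_mul_comp s (fun t => r t u) _ s0

theorem ibObjective_comp [Fintype B] [Fintype S] {m : A × B → ℝ} (hm : ∀ z, 0 ≤ m z)
    (s : A → S) (β : ℝ) {n : ℕ} {r : S → Fin n → ℝ} (hr : ∀ s0 u, 0 ≤ r s0 u) :
    ibObjective m β (fun a => r (s a)) = ibObjective (pushFst s m) β r := by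
  simp only [ibObjective, sum_pushFst, sum_comp_mul_eq_sum_pushFst s m r]
  rw [← mutInfo_comp_eq_mutInfo_fiberSum s hr (margX_nonneg hm)]
  rfl

end InformationBottleneck

section AveragedKernel

variable {A S U : Type*} [Fintype A]

/-- The law of `U` given `s(A) = s0` when `A` has weights `w` and `U` given `A` has law `r`;
a fibre of weight zero gets the arbitrary row `r a₀`. -/
def fiberAvgKernel (w : A → ℝ) (s : A → S) (r : A → U → ℝ) (a₀ : A) : S → U → ℝ :=
  fun s0 u => if fiberSum s w s0 = 0 then r a₀ u
    else fiberSum s (fun a => r a u * w a) s0 / fiberSum s w s0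

variable {w : A → ℝ} {s : A → S} {r : A → U → ℝ}

theorem fiberAvgKernel_nonneg (hw : ∀ a, 0 ≤ w a) (hr : ∀ a u, 0 ≤ r a u) (a₀ : A) (s0 : S)
    (u : U) : 0 ≤ fiberAvgKernel w s r a₀ s0 u := by
  unfold fiberAvgKernel
  split_ifs
  · exact hr a₀ u
  · exact div_nonneg (fiberSum_nonneg (fun a => mul_nonneg (hr a u) (hw a)) s0)
      (fiberSum_nonneg hw s0)

theorem sum_fiberAvgKernel [Fintype U] (hr : ∀ a, ∑ u, r a u = 1) (a₀ : A) (s0 : S) :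
    ∑ u, fiberAvgKernel w s r a₀ s0 u = 1 := by
  unfold fiberAvgKernel
  split_ifs with h
  · exact hr a₀
  · rw [← Finset.sum_div, sum_fiberSum_comm]
    simp only [← Finset.sum_mul, hr, one_mul]
    exact div_self h

theorem fiberAvgKernel_mul_fiberSum (hw : ∀ a, 0 ≤ w a) (a₀ : A) (s0 : S) (u : U) :
    fiberAvgKernel w s r a₀ s0 u * fiberSum s w s0 = fiberSum s (fun a => r a u * w a) s0 := by
  unfold fiberAvgKernel
  split_ifs with h
  · rw [h, mul_zero]
    refine (Finset.sum_eq_zero fun a ha => ?_).symm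
    rw [← (Finset.mem_filter.1 ha).2] at h
    rw [eq_zero_of_fiberSum_eq_zero hw h, mul_zero]
  · exact div_mul_cancel₀ _ h

end AveragedKernel

section Sufficiency

variable {A B S : Type*} [Fintype A] [Fintype B] {m : A × B → ℝ} {s : A → S}

theorem SuffS.mul_fiberSum_margX (hs : SuffS m s) (a : A) (b : B) :
    m (a, b) * fiberSum s (margX m) (s a) = margX m a * pushFst s m (s a, b) := by
  simp only [fiberSum, pushFst, Finset.mul_sum]
  refine Finset.sum_congr rfl fun a' ha' => ?_
  rw [hs a a' b (Finset.mem_filter.1 ha').2.symm, mul_comm]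

variable {U : Type*}

theorem sum_fiberAvgKernel_mul_pushFst [Fintype S] (hm : ∀ z, 0 ≤ m z) (hs : SuffS m s)
    (r : A → U → ℝ) (a₀ : A) (u : U) (b : B) :
    ∑ s0, fiberAvgKernel (margX m) s r a₀ s0 u * pushFst s m (s0, b) = ∑ a, r a u * m (a, b) := by
  rw [← sum_fiberSum s (fun a => r a u * m (a, b))]
  refine Finset.sum_congr rfl fun s0 _ => ?_
  by_cases h : fiberSum s (margX m) s0 = 0
  · have hnull : ∀ a, s a = s0 → m (a, b) = 0 := fun a ha => by
      subst ha
      refine le_antisymm ?_ (hm _)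
      rw [← eq_zero_of_fiberSum_eq_zero (margX_nonneg hm) h]
      exact Finset.single_le_sum (fun b _ => hm (a, b)) (Finset.mem_univ b)
    have hP : pushFst s m (s0, b) = 0 :=
      Finset.sum_eq_zero fun a ha => hnull a (Finset.mem_filter.1 ha).2
    rw [hP, mul_zero]
    exact (Finset.sum_eq_zero fun a ha => by rw [hnull a (Finset.mem_filter.1 ha).2, mul_zero]).symm
  · apply mul_right_cancel₀ h
    rw [mul_right_comm, fiberAvgKernel_mul_fiberSum (margX_nonneg hm)]
    simp only [fiberSum, Finset.sum_mul]
    refine Finset.sum_congr rfl fun a ha => ?_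
    obtain rfl := (Finset.mem_filter.1 ha).2
    rw [mul_assoc, mul_assoc, ← hs.mul_fiberSum_margX]
    rfl

theorem ibObjective_fiberAvgKernel_le [Fintype S] (hm : ∀ z, 0 ≤ m z) (hs : SuffS m s) (β : ℝ)
    {n : ℕ} {r : A → Fin n → ℝ} (hr : ∀ a u, 0 ≤ r a u) (a₀ : A) :
    ibObjective (pushFst s m) β (fiberAvgKernel (margX m) s r a₀) ≤ ibObjective m β r := by
  simp only [ibObjective, sum_fiberAvgKernel_mul_pushFst hm hs, sum_pushFst,
    fiberAvgKernel_mul_fiberSum (margX_nonneg hm)]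
  exact sub_le_sub_right (mutInfo_fiberSum_le (q := fun z : Fin n × A => r z.2 z.1 * margX m z.2)
    (fun z => mul_nonneg (hr _ _) (margX_nonneg hm _)) s) _

end Sufficiency

theorem ib_lagrangian_sufficient_first_argument_general
    [Fintype 𝒳] [Nonempty 𝒳] [Fintype 𝒴]
    [Fintype 𝒮]
    (p : 𝒳 × 𝒴 → ℝ) (hp : IsPMF p)
    (s : 𝒳 → 𝒮) (hs : SuffS p s)
    (β : ℝ) :
    ibL p β
      = ibL (fun w : 𝒮 × 𝒴 =>
          ∑ x ∈ Finset.univ.filter (fun x => s x = w.1), p (x, w.2)) β := by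
  change ibL p β = ibL (pushFst s p) β
  apply csInf_eq_csInf_of_forall_exists_le
  · rintro _ ⟨n, r, hr0, hr1, rfl⟩
    obtain ⟨x₀⟩ : Nonempty 𝒳 := inferInstance
    exact ⟨_, ⟨n, _, fiberAvgKernel_nonneg (margX_nonneg hp.1) hr0 x₀,
      sum_fiberAvgKernel hr1 x₀, rfl⟩, ibObjective_fiberAvgKernel_le hp.1 hs β hr0 x₀⟩
  · rintro _ ⟨n, r, hr0, hr1, rfl⟩
    exact ⟨_, ⟨n, fun x => r (s x), fun x => hr0 (s x), fun x => hr1 (s x), rfl⟩,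
      (ibObjective_comp hp.1 s β hr0).le⟩

/-- The information-bottleneck Lagrangian value is preserved when
replacing `X` by a sufficient statistic `S = s(X)`. -/
theorem ib_lagrangian_sufficient_first_argument
    [Fintype 𝒳] [Nonempty 𝒳] [Fintype 𝒴] [Nonempty 𝒴]
    [Fintype 𝒮] [Nonempty 𝒮]
    (p : 𝒳 × 𝒴 → ℝ) (hp : IsPMF p)
    (hX : ∀ x, 0 < margX p x) (hY : ∀ y, 0 < margY p y)
    (s : 𝒳 → 𝒮) (hs : SuffS p s)
    (β : ℝ) (hβ : 0 < β) :
    ibL p β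
      = ibL (fun w : 𝒮 × 𝒴 =>
          ∑ x ∈ Finset.univ.filter (fun x => s x = w.1), p (x, w.2)) β :=
  ib_lagrangian_sufficient_first_argument_general p hp s hs β
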